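/- For every configuration P with P ≠ {(0,0)}, the area s of stairs(P) satisfies s ≤ α + α·ln(1/α). -/

import Mathlib

open MeasureTheory Set
open scoped Classical

noncomputable section

/-- The cake: the unit square `[0,1]²`. -/
def unitSq : Set (ℝ × ℝ) := Set.Icc ((0, 0) : ℝ × ℝ) ((1, 1) : ℝ × ℝ)

/-- A configuration: a finite point set in the unit square containing the origin. -/
def IsConfig (P : Finset (ℝ × ℝ)) : Prop := ((0, 0) : ℝ × ℝ) ∈ P ∧ ↑P ⊆ unitSq

/-- Area of the closed axis-parallel rectangle with lower left corner `a` and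
upper right corner `b`. -/
def rectArea (a b : ℝ × ℝ) : ℝ := (volume (Set.Icc a b)).toReal

/-- A Bob family for `P`, encoded by assigning to each point `p ∈ P` the upper
right corner `q p` of the closed axis-parallel rectangle placed with lower left
corner `p` (a degenerate rectangle `q p = p` encodes an unused point); the
rectangles lie in the unit square and have pairwise disjoint interiors, and
distinct rectangles automatically have distinct lower left corners. -/
def IsBobFamily (P : Finset (ℝ × ℝ)) (q : ℝ × ℝ → ℝ × ℝ) : Prop :=
  (∀ p ∈ P, p ≤ q p) ∧
  (∀ p ∈ P, Set.Icc p (q p) ⊆ unitSq) ∧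
  (∀ p ∈ P, ∀ p' ∈ P, p ≠ p' →
    interior (Set.Icc p (q p)) ∩ interior (Set.Icc p' (q p')) = ∅)

/-- The total area of a Bob family. -/
def famArea (P : Finset (ℝ × ℝ)) (q : ℝ × ℝ → ℝ × ℝ) : ℝ :=
  ∑ p ∈ P, rectArea p (q p)

/-- `bob(P)`: the supremum of the total area over all Bob families for `P`. -/
def bobP (P : Finset (ℝ × ℝ)) : ℝ :=
  sSup { a : ℝ | ∃ q : ℝ × ℝ → ℝ × ℝ, IsBobFamily P q ∧ a = famArea P q }

/-- `bob(n)`: the infimum of `bob(P)` over all configurations with `n` points. -/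
def bobN (n : ℕ) : ℝ :=
  sInf { a : ℝ | ∃ P : Finset (ℝ × ℝ), IsConfig P ∧ P.card = n ∧ a = bobP P }

/-- `n(r)`: the least `n ≥ 1` with `bob(n) ≤ 1/r`, or `∞` if there is none. -/
def nOf (r : ℝ) : ℕ∞ :=
  sInf { N : ℕ∞ | ∃ n : ℕ, N = (n : ℕ∞) ∧ 1 ≤ n ∧ bobN n ≤ 1 / r }

/-- `stairs(P)`: the union of all closed axis-parallel rectangles in the unit
square with lower left corner `(0,0)` whose interior contains no point of `P`. -/
def stairs (P : Finset (ℝ × ℝ)) : Set (ℝ × ℝ) :=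
  ⋃ b ∈ { b : ℝ × ℝ | b ∈ unitSq ∧ ∀ p ∈ P, p ∉ interior (Set.Icc ((0, 0) : ℝ × ℝ) b) },
    Set.Icc ((0, 0) : ℝ × ℝ) b

/-- `s`: the area of `stairs(P)`. -/
def stairsArea (P : Finset (ℝ × ℝ)) : ℝ := (volume (stairs P)).toReal

/-- `α`: the supremum of areas of axis-parallel rectangles contained in `stairs(P)`. -/
def alphaOf (P : Finset (ℝ × ℝ)) : ℝ :=
  sSup { a : ℝ | ∃ c d : ℝ × ℝ, c ≤ d ∧ Set.Icc c d ⊆ stairs P ∧ a = rectArea c d }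

/-- `ρ := s/α`. -/
def rhoOf (P : Finset (ℝ × ℝ)) : ℝ := stairsArea P / alphaOf P

/-- `a` is a minimum of `S`: no other point of `S` is (weakly) dominated-below it. -/
def IsMinOf (S : Set (ℝ × ℝ)) (a : ℝ × ℝ) : Prop :=
  a ∈ S ∧ ∀ b ∈ S, b ≠ a → ¬(b.1 ≤ a.1 ∧ b.2 ≤ a.2)

/-- `p 0, …, p (k-1)` enumerates the minima of `P \ {(0,0)}` in order of
strictly decreasing `y`-coordinate. -/
def EnumMinima (P : Finset (ℝ × ℝ)) (k : ℕ) (p : Fin k → ℝ × ℝ) : Prop :=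
  (∀ i : Fin k, IsMinOf ((↑P : Set (ℝ × ℝ)) \ {((0, 0) : ℝ × ℝ)}) (p i)) ∧
  (∀ q : ℝ × ℝ, IsMinOf ((↑P : Set (ℝ × ℝ)) \ {((0, 0) : ℝ × ℝ)}) q → ∃ i : Fin k, p i = q) ∧
  (∀ i j : Fin k, i < j → (p j).2 < (p i).2)

/-- The sequence `y₀ = 1`, `yᵢ = y(pᵢ)` (with the paper's `pᵢ` being `p (i-1)` here). -/
def YSeq (k : ℕ) (p : Fin k → ℝ × ℝ) (y : ℕ → ℝ) : Prop :=
  y 0 = 1 ∧ ∀ i : Fin k, y (i.1 + 1) = (p i).2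

/-- The rectangle `Bᵢ = [x(pᵢ), 1] × [yᵢ, y_{i-1}]` (0-indexed here). -/
def rectB (k : ℕ) (p : Fin k → ℝ × ℝ) (y : ℕ → ℝ) (i : Fin k) : Set (ℝ × ℝ) :=
  Set.Icc (((p i).1, y (i.1 + 1)) : ℝ × ℝ) ((1, y i.1) : ℝ × ℝ)

/-- `βᵢ`: the area of `Bᵢ`. -/
def betaOf (k : ℕ) (p : Fin k → ℝ × ℝ) (y : ℕ → ℝ) (i : Fin k) : ℝ :=
  (volume (rectB k p y i)).toReal

/-- The affine map sending the rectangle with corners `a ≤ b` onto `[0,1]²`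
(with `a ↦ (0,0)`). -/
def rectMap (a b : ℝ × ℝ) (q : ℝ × ℝ) : ℝ × ℝ :=
  ((q.1 - a.1) / (b.1 - a.1), (q.2 - a.2) / (b.2 - a.2))

/-- `Pᵢ`: the image of `P ∩ Bᵢ` under the affine map sending `Bᵢ` onto `[0,1]²`. -/
def subConfig (P : Finset (ℝ × ℝ)) (k : ℕ) (p : Fin k → ℝ × ℝ) (y : ℕ → ℝ)
    (i : Fin k) : Finset (ℝ × ℝ) :=
  (P.filter (fun q => q ∈ rectB k p y i)).image
    (rectMap (((p i).1, y (i.1 + 1)) : ℝ × ℝ) ((1, y i.1) : ℝ × ℝ))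

open Filter Topology

/-
The key fact is that every point `z` of `stairs(P)` spans the rectangle `[0, z]` inside
`stairs(P)`, so `z.1 * z.2 ≤ α`. Hence `stairs(P)` lies in `[0, α] × [0, 1]` together with the
region under the hyperbola `y = α / x` over `[α, 1]`, whose areas are `α` and `α·ln(1/α)`.
-/

lemma volume_Icc_prod (a b : ℝ × ℝ) :
    volume (Icc a b) = ENNReal.ofReal (b.1 - a.1) * ENNReal.ofReal (b.2 - a.2) := by
  rw [Icc_prod_eq, Measure.volume_eq_prod, Measure.prod_prod, Real.volume_Icc, Real.volume_Icc]

lemma rectArea_eq {a b : ℝ × ℝ} (h : a ≤ b) : rectArea a b = (b.1 - a.1) * (b.2 - a.2) := by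
  rw [rectArea, volume_Icc_prod, ENNReal.toReal_mul, ENNReal.toReal_ofReal (sub_nonneg.2 h.1),
    ENNReal.toReal_ofReal (sub_nonneg.2 h.2)]

lemma rectArea_le_one {c d : ℝ × ℝ} (h : Icc c d ⊆ unitSq) : rectArea c d ≤ 1 := by
  have hsq : volume unitSq = 1 := by simp [unitSq, volume_Icc_prod]
  have := ENNReal.toReal_mono (hsq ▸ ENNReal.one_ne_top) (measure_mono h)
  rwa [hsq, ENNReal.toReal_one] at this

lemma volume_setOf_mem_Icc {s : Set ℝ} {f g : ℝ → ℝ} (hf : Measurable f) (hg : Measurable g)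
    (hs : MeasurableSet s) :
    volume {p : ℝ × ℝ | p.1 ∈ s ∧ p.2 ∈ Icc (f p.1) (g p.1)} =
      ∫⁻ x in s, ENNReal.ofReal (g x - f x) := by
  rw [Measure.volume_eq_prod, Measure.prod_apply (measurableSet_region_between_cc hf hg hs),
    ← lintegral_indicator hs]
  congr 1 with x
  by_cases hx : x ∈ s
  · rw [indicator_of_mem hx, ← Real.volume_Icc]
    congr 1 with y
    simp [hx]
  · simp [hx]

lemma volume_under_hyperbola {a : ℝ} (ha0 : 0 < a) (ha1 : a ≤ 1) :
    volume {p : ℝ × ℝ | p.1 ∈ Icc a 1 ∧ p.2 ∈ Icc 0 (a / p.1)} =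
      ENNReal.ofReal (a * Real.log (1 / a)) := by
  have hcont : ContinuousOn (fun x : ℝ => a / x) (Icc a 1) :=
    continuousOn_const.div continuousOn_id fun x hx => (ha0.trans_le hx.1).ne'
  have hnonneg : ∀ x ∈ Icc a 1, 0 ≤ a / x - 0 := fun x hx =>
    by simpa using div_nonneg ha0.le (ha0.le.trans hx.1)
  rw [volume_setOf_mem_Icc measurable_const (by fun_prop) measurableSet_Icc,
    ← ofReal_integral_eq_lintegral_ofReal (by simp only [sub_zero]; exact hcont.integrableOn_Icc)
      ((ae_restrict_iff' measurableSet_Icc).2 (.of_forall hnonneg)),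
    integral_Icc_eq_integral_Ioc, ← intervalIntegral.integral_of_le ha1]
  simp_rw [sub_zero, div_eq_mul_inv a, intervalIntegral.integral_const_mul,
    integral_inv_of_pos ha0 one_pos]

lemma volume_le_of_forall_mul_le {S : Set (ℝ × ℝ)} {a : ℝ} (ha0 : 0 < a) (ha1 : a ≤ 1)
    (hS : S ⊆ unitSq) (hmul : ∀ z ∈ S, z.1 * z.2 ≤ a) :
    (volume S).toReal ≤ a + a * Real.log (1 / a) := by
  have hcover : S ⊆ Icc (0, 0) (a, 1) ∪ {p | p.1 ∈ Icc a 1 ∧ p.2 ∈ Icc 0 (a / p.1)} := by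
    intro z hz
    obtain ⟨⟨hx0, hy0⟩, hx1, hy1⟩ := hS hz
    rcases le_or_gt z.1 a with hxa | hax
    · exact Or.inl ⟨⟨hx0, hy0⟩, hxa, hy1⟩
    · refine Or.inr ⟨⟨hax.le, hx1⟩, hy0, ?_⟩
      rw [le_div_iff₀ (ha0.trans hax), mul_comm]
      exact hmul z hz
  have hlog : 0 ≤ a * Real.log (1 / a) :=
    mul_nonneg ha0.le (Real.log_nonneg (one_le_one_div ha0 ha1))
  refine ENNReal.toReal_le_of_le_ofReal (by positivity) ?_
  calc volume S
      ≤ volume (Icc ((0 : ℝ), (0 : ℝ)) (a, 1)) +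
          volume {p : ℝ × ℝ | p.1 ∈ Icc a 1 ∧ p.2 ∈ Icc 0 (a / p.1)} :=
        (measure_mono hcover).trans (measure_union_le _ _)
    _ = ENNReal.ofReal (a + a * Real.log (1 / a)) := by
        rw [volume_Icc_prod, volume_under_hyperbola ha0 ha1, ENNReal.ofReal_add ha0.le hlog]
        simp

section Stairs

variable (P : Finset (ℝ × ℝ))

lemma stairs_subset_unitSq : stairs P ⊆ unitSq :=
  iUnion₂_subset fun _ hb => Icc_subset_Icc_right hb.1.2

lemma Icc_zero_subset_stairs {b : ℝ × ℝ} (hb : b ∈ unitSq)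
    (hP : ∀ p ∈ P, p ∉ interior (Icc (0, 0) b)) : Icc (0, 0) b ⊆ stairs P :=
  subset_biUnion_of_mem (u := fun b => Icc ((0, 0) : ℝ × ℝ) b) ⟨hb, hP⟩

lemma Icc_zero_subset_stairs_of_mem {z : ℝ × ℝ} (hz : z ∈ stairs P) :
    Icc (0, 0) z ⊆ stairs P := by
  simp only [stairs, mem_iUnion, exists_prop] at hz
  obtain ⟨b, hb, hzb⟩ := hz
  exact (Icc_subset_Icc_right hzb.2).trans (Icc_zero_subset_stairs P hb.1 hb.2)

lemma alphaOf_le_one : alphaOf P ≤ 1 :=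
  Real.sSup_le (fun _ ⟨_, _, _, hsub, ha⟩ => ha ▸ rectArea_le_one (hsub.trans
    (stairs_subset_unitSq P))) zero_le_one

lemma mul_le_alphaOf {z : ℝ × ℝ} (hz : z ∈ stairs P) : z.1 * z.2 ≤ alphaOf P := by
  have hz0 : ((0, 0) : ℝ × ℝ) ≤ z := (stairs_subset_unitSq P hz).1
  refine le_csSup ⟨1, ?_⟩ ⟨(0, 0), z, hz0, Icc_zero_subset_stairs_of_mem P hz, ?_⟩
  · rintro _ ⟨c, d, -, hsub, rfl⟩
    exact rectArea_le_one (hsub.trans (stairs_subset_unitSq P))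
  · simp [rectArea_eq hz0]

/- A strip `[0, m] × [0, 1]` thinner than every positive `x`-coordinate of `P` lies in
`stairs(P)`. -/
lemma alphaOf_pos : 0 < alphaOf P := by
  have hfar : ∀ p ∈ P, ∀ᶠ m in 𝓝[>] (0 : ℝ), ¬(0 < p.1 ∧ p.1 < m) := by
    intro p _
    rcases le_or_gt p.1 0 with hp | hp
    · exact .of_forall fun _ h => hp.not_gt h.1
    · exact ((eventually_lt_nhds hp).filter_mono nhdsWithin_le_nhds).mono
        fun _ hm h => hm.not_gt h.2
  obtain ⟨m, hP, hm0, hm1⟩ :=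
    ((P.eventually_all.2 hfar).and (Ioc_mem_nhdsGT zero_lt_one)).exists
  have hmem : ((m, 1) : ℝ × ℝ) ∈ stairs P := by
    refine Icc_zero_subset_stairs P
      ⟨Prod.mk_le_mk.2 ⟨hm0.le, zero_le_one⟩, Prod.mk_le_mk.2 ⟨hm1, le_rfl⟩⟩
      (fun p hp hint => ?_) (right_mem_Icc.2 ⟨hm0.le, zero_le_one⟩)
    rw [Icc_prod_eq, interior_prod_eq, interior_Icc, interior_Icc] at hint
    exact hP p hp hint.1
  exact hm0.trans_le (by simpa using mul_le_alphaOf P hmem)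

end Stairs

/-- The area of the staircase satisfies `s ≤ α + α·ln(1/α)`. -/
theorem statement5 :
    ∀ P : Finset (ℝ × ℝ), IsConfig P → P ≠ {((0, 0) : ℝ × ℝ)} →
      stairsArea P ≤ alphaOf P + alphaOf P * Real.log (1 / alphaOf P) := by
  intro P _ _
  exact volume_le_of_forall_mul_le (alphaOf_pos P) (alphaOf_le_one P) (stairs_subset_unitSq P)
    fun _ => mul_le_alphaOf P
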